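/- The presented group with generators d, f, g, i, j, l and relators (jg)(gd)⁻¹, (lf)j⁻¹, (id)(lif)⁻¹ is isomorphic to the presented group with generators a₁, b₁, a₂, b₂ and single relator [a₁,b₁][a₂,b₂], where [x,y] = x y x⁻¹ y⁻¹ denotes the commutator; i.e., it is isomorphic to the fundamental group of the closed orientable surface of genus 2. -/

import Mathlib

/-!
Two Tietze transformations: the relations `jg = gd` and `lf = j` let one eliminate
`j = g d g⁻¹` and `f = l⁻¹ j`, after which `id = lif` becomes `l i⁻¹ l⁻¹ i d g d⁻¹ g⁻¹ = 1`,
that is `[l, i⁻¹][d, g] = 1`. So `l, i⁻¹, d, g` play the roles of `a₁, b₁, a₂, b₂`.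
-/

namespace Genus2PresentedGroup

open scoped commutatorElement

def d : FreeGroup (Fin 6) := FreeGroup.of 0
def f : FreeGroup (Fin 6) := FreeGroup.of 1
def g : FreeGroup (Fin 6) := FreeGroup.of 2
def i : FreeGroup (Fin 6) := FreeGroup.of 3
def j : FreeGroup (Fin 6) := FreeGroup.of 4
def l : FreeGroup (Fin 6) := FreeGroup.of 5

def a₁ : FreeGroup (Fin 4) := FreeGroup.of 0
def b₁ : FreeGroup (Fin 4) := FreeGroup.of 1
def a₂ : FreeGroup (Fin 4) := FreeGroup.of 2
def b₂ : FreeGroup (Fin 4) := FreeGroup.of 3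

/-- The relators `(jg)(gd)⁻¹`, `(lf)j⁻¹`, `(id)(lif)⁻¹`. -/
def rels₁ : Set (FreeGroup (Fin 6)) :=
  {(j * g) * (g * d)⁻¹, (l * f) * j⁻¹, (i * d) * (l * i * f)⁻¹}

/-- The single relator `[a₁,b₁][a₂,b₂]` of the genus 2 surface group. -/
def rels₂ : Set (FreeGroup (Fin 4)) := {⁅a₁, b₁⁆ * ⁅a₂, b₂⁆}

open PresentedGroup (of toGroup)

theorem lift_of_eq_one {α : Type*} {rels : Set (FreeGroup α)} :
    ∀ r ∈ rels, FreeGroup.lift (of (rels := rels)) r = 1 := fun _ hr =>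
  (FreeGroup.lift_unique (PresentedGroup.mk rels) fun _ => rfl).symm.trans
    (PresentedGroup.one_of_mem hr)

section

variable {H : Type*} [Group H]

theorem lift_rels₁_eq_one_iff (x : Fin 6 → H) :
    (∀ r ∈ rels₁, FreeGroup.lift x r = 1) ↔
      x 4 * x 2 = x 2 * x 0 ∧ x 5 * x 1 = x 4 ∧ x 3 * x 0 = x 5 * x 3 * x 1 := by
  simp only [rels₁, Set.mem_insert_iff, Set.mem_singleton_iff, forall_eq_or_imp, forall_eq,
    map_mul, map_inv, mul_inv_eq_one, d, f, g, i, j, l, FreeGroup.lift_apply_of]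

theorem lift_rels₂_eq_one_iff (x : Fin 4 → H) :
    (∀ r ∈ rels₂, FreeGroup.lift x r = 1) ↔ ⁅x 0, x 1⁆ * ⁅x 2, x 3⁆ = 1 := by
  simp [rels₂, a₁, b₁, a₂, b₂, commutatorElement_def]

theorem relations_iff_eliminated (d f g i j l : H) :
    (j * g = g * d ∧ l * f = j ∧ i * d = l * i * f) ↔
      j = g * d * g⁻¹ ∧ f = i⁻¹ * l⁻¹ * i * d ∧ ⁅l, i⁻¹⁆ * ⁅d, g⁆ = 1 := by
  have key : l * (i⁻¹ * l⁻¹ * i * d) * (g * d * g⁻¹)⁻¹ = ⁅l, i⁻¹⁆ * ⁅d, g⁆ := by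
    simp only [commutatorElement_def]
    group
  constructor
  · rintro ⟨hjg, hlf, hid⟩
    obtain rfl : j = g * d * g⁻¹ := eq_mul_inv_of_mul_eq hjg
    obtain rfl : f = i⁻¹ * l⁻¹ * i * d := by rw [mul_assoc, hid]; group
    exact ⟨rfl, rfl, by rw [← key, hlf, mul_inv_cancel]⟩
  · rintro ⟨rfl, rfl, h⟩
    exact ⟨by group, mul_inv_eq_one.1 (key.trans h), by group⟩

end

def toSurfaceGroup : PresentedGroup rels₁ →* PresentedGroup rels₂ :=
  toGroup (f := ![of 2, of 1 * (of 0)⁻¹ * (of 1)⁻¹ * of 2, of 3, (of 1)⁻¹, of 3 * of 2 * (of 3)⁻¹,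
      of 0])
    ((lift_rels₁_eq_one_iff _).2 <| (relations_iff_eliminated ..).2
      ⟨rfl, by simp, by simpa using (lift_rels₂_eq_one_iff _).1 lift_of_eq_one⟩)

def ofSurfaceGroup : PresentedGroup rels₂ →* PresentedGroup rels₁ :=
  toGroup (f := ![of 5, (of 3)⁻¹, of 0, of 2])
    ((lift_rels₂_eq_one_iff _).2 ((relations_iff_eliminated ..).1
      ((lift_rels₁_eq_one_iff _).1 lift_of_eq_one)).2.2)

/-- The presented group `⟨d,f,g,i,j,l ∣ (jg)(gd)⁻¹, (lf)j⁻¹, (id)(lif)⁻¹⟩` is isomorphic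
to the presented group `⟨a₁,b₁,a₂,b₂ ∣ [a₁,b₁][a₂,b₂]⟩`, the fundamental group of the
closed orientable surface of genus 2. -/
theorem presentedGroup_iso_surfaceGroup :
    Nonempty (PresentedGroup rels₁ ≃* PresentedGroup rels₂) := by
  obtain ⟨hj, hf, -⟩ := (relations_iff_eliminated ..).1
    ((lift_rels₁_eq_one_iff (of (rels := rels₁))).1 lift_of_eq_one)
  refine ⟨toSurfaceGroup.toMulEquiv ofSurfaceGroup ?_ ?_⟩
  · ext k
    fin_cases k <;> simp [toSurfaceGroup, ofSurfaceGroup, hj, hf]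
  · ext k
    fin_cases k <;> simp [toSurfaceGroup, ofSurfaceGroup]

end Genus2PresentedGroup
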